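/- arXiv:2010.05972 — 2 statements merged into one kernel-verified Lean document; each statement's English description precedes it below -/
import Mathlib

section
/- Let k ≥ 2, s ≥ 1, and 1 ≤ j ≤ k−1 be integers, and θ ∈ ℝ. For a finite set S of positive integers with |S| = m and max(S) ≤ k+m−1, define A_S = {0,1,…,k+m−1} \ S and F(A) = ∏_{a<b, a,b ∈ A} sin((b−a)θ); write F₀ = F({0,…,k−1}). Then F(A_{{j}}) · F(A_{[s]}) = F₀ · F(A_{[s−1] ∪ {j+s}}) + F₀ · F(A_{[s] ∪ {j+s}}), where [m] denotes {1,…,m} and [0] = ∅. -/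
/-- `sineVandermonde θ A = ∏_{a<b, a,b ∈ A} sin((b−a)θ)`. -/
noncomputable def sineVandermonde (θ : ℝ) (A : Finset ℕ) : ℝ :=
  ∏ p ∈ (A ×ˢ A).filter (fun p => p.1 < p.2), Real.sin (((p.2 - p.1 : ℕ) : ℝ) * θ)

/-- `gapSet k S = {0,1,…,k+|S|−1} \ S`. -/
def gapSet (k : ℕ) (S : Finset ℕ) : Finset ℕ :=
  Finset.range (k + S.card) \ S

/-!
Write `F(A) = ∏_{a<b} u(b - a)` with `u d = sin (d θ)`. Adjoining to `A` a point lying below or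
above all of it multiplies `F(A)` by the product of `u` over the distances to that point, and `F`
is translation invariant. Each of `A_{[s]}`, `A_{[s-1]∪{j+s}}`, `A_{[s]∪{j+s}}` is `0` together
with a translate of an interval or of an interval with one hole; removing `0` leaves a common
product times `u(s+j)`, `u(s)`, `u(s+k)` respectively. Growing intervals with a hole one point at
a time shows likewise that the remaining pairs of Vandermonde factors in the three terms are
`c·u(k)`, `c·u(k-j)`, `c·u(j)` for a common `c`. What is left is the Ptolemy relation
`u(k) u(s+j) = u(k-j) u(s) + u(j) u(k+s)`.
-/

open Finset

lemma Finset.mem_map_addRightEmbedding {A : Finset ℕ} {s x : ℕ} :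
    x ∈ A.map (addRightEmbedding s) ↔ s ≤ x ∧ x - s ∈ A := by
  simp only [mem_map, addRightEmbedding_apply]
  constructor
  · rintro ⟨y, hy, rfl⟩
    simpa using hy
  · rintro ⟨hx, hxA⟩
    exact ⟨x - s, hxA, Nat.sub_add_cancel hx⟩

lemma Real.sin_add_mul_sin_add (x y z : ℝ) :
    sin (x + y) * sin (y + z) = sin x * sin z + sin y * sin (x + y + z) := by
  simp only [sin_add, cos_add]
  linear_combination (sin x * sin z) * sin_sq_add_cos_sq y

lemma sineVandermonde_eq_prod_prod (θ : ℝ) (A : Finset ℕ) :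
    sineVandermonde θ A =
      ∏ a ∈ A, ∏ b ∈ A, if a < b then Real.sin (((b - a : ℕ) : ℝ) * θ) else 1 := by
  rw [sineVandermonde, prod_filter, prod_product]

lemma sineVandermonde_insert_of_forall_lt {θ : ℝ} {A : Finset ℕ} {x : ℕ}
    (hA : ∀ a ∈ A, a < x) :
    sineVandermonde θ (insert x A) =
      sineVandermonde θ A * ∏ a ∈ A, Real.sin (((x - a : ℕ) : ℝ) * θ) := by
  have hx : x ∉ A := fun h => (hA x h).false
  simp only [sineVandermonde_eq_prod_prod, prod_insert hx, lt_irrefl, if_false, one_mul,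
    prod_mul_distrib]
  rw [prod_eq_one fun b hb => if_neg (hA b hb).le.not_gt,
    prod_congr rfl fun a ha => if_pos (hA a ha)]
  ring

lemma sineVandermonde_insert_of_forall_gt {θ : ℝ} {A : Finset ℕ} {x : ℕ}
    (hA : ∀ a ∈ A, x < a) :
    sineVandermonde θ (insert x A) =
      sineVandermonde θ A * ∏ a ∈ A, Real.sin (((a - x : ℕ) : ℝ) * θ) := by
  have hx : x ∉ A := fun h => (hA x h).false
  simp only [sineVandermonde_eq_prod_prod, prod_insert hx, lt_irrefl, if_false, one_mul,
    prod_mul_distrib]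
  rw [prod_eq_one fun b hb => if_neg (hA b hb).le.not_gt,
    prod_congr rfl fun a ha => if_pos (hA a ha)]
  ring

lemma sineVandermonde_map_add (θ : ℝ) (A : Finset ℕ) (s : ℕ) :
    sineVandermonde θ (A.map (addRightEmbedding s)) = sineVandermonde θ A := by
  simp only [sineVandermonde_eq_prod_prod, prod_map, addRightEmbedding_apply,
    add_lt_add_iff_right, Nat.add_sub_add_right]

lemma sineVandermonde_insert_zero_map_add (θ : ℝ) (A : Finset ℕ) {s : ℕ} (hs : 0 < s) :
    sineVandermonde θ (insert 0 (A.map (addRightEmbedding s))) =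
      sineVandermonde θ A * ∏ a ∈ A, Real.sin (((a + s : ℕ) : ℝ) * θ) := by
  rw [sineVandermonde_insert_of_forall_gt, sineVandermonde_map_add, prod_map]
  · simp only [addRightEmbedding_apply, Nat.sub_zero]
  · intro a ha
    exact hs.trans_le (mem_map_addRightEmbedding.1 ha).1

noncomputable def sinProd (θ : ℝ) (p q : ℕ) : ℝ :=
  ∏ d ∈ Ico p q, Real.sin ((d : ℝ) * θ)

lemma sinProd_succ (θ : ℝ) {p q : ℕ} (h : p ≤ q) :
    sinProd θ p (q + 1) = sinProd θ p q * Real.sin ((q : ℝ) * θ) :=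
  prod_Ico_succ_top h _

lemma sinProd_eq_mul_mul (θ : ℝ) {p m q : ℕ} (hpm : p ≤ m) (hmq : m < q) :
    sinProd θ p q = sinProd θ p m * Real.sin ((m : ℝ) * θ) * sinProd θ (m + 1) q := by
  rw [sinProd, ← prod_Ico_consecutive _ hpm hmq.le, prod_eq_prod_Ico_succ_bot hmq, ← mul_assoc]
  rfl

lemma sineVandermonde_range_succ (θ : ℝ) (n : ℕ) :
    sineVandermonde θ (range (n + 1)) = sineVandermonde θ (range n) * sinProd θ 1 (n + 1) := by
  rw [range_add_one, sineVandermonde_insert_of_forall_lt fun a ha => mem_range.1 ha,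
    range_eq_Ico, prod_Ico_reflect (fun d : ℕ => Real.sin ((d : ℝ) * θ)) 0 (Nat.le_succ n),
    Nat.add_sub_cancel_left, Nat.sub_zero, sinProd]

def rangeWithHole (a b : ℕ) : Finset ℕ :=
  range a ∪ Ico (a + 1) (a + b + 1)

lemma mem_rangeWithHole {a b x : ℕ} : x ∈ rangeWithHole a b ↔ x < a + b + 1 ∧ x ≠ a := by
  simp only [rangeWithHole, mem_union, mem_range, mem_Ico]
  omega

lemma prod_rangeWithHole {M : Type*} [CommMonoid M] (f : ℕ → M) (a b : ℕ) :
    ∏ x ∈ rangeWithHole a b, f x =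
      (∏ x ∈ range a, f x) * ∏ x ∈ Ico (a + 1) (a + b + 1), f x :=
  prod_union <| disjoint_left.2 fun x hx hx' => by
    simp only [mem_range, mem_Ico] at hx hx'
    omega

lemma insert_rangeWithHole (a b : ℕ) : insert a (rangeWithHole a b) = range (a + b + 1) := by
  ext x
  simp only [mem_insert, mem_rangeWithHole, mem_range]
  omega

lemma rangeWithHole_succ_left (a b : ℕ) :
    rangeWithHole (a + 1) b = insert 0 ((rangeWithHole a b).map (addRightEmbedding 1)) := by
  ext x
  simp only [mem_insert, mem_map_addRightEmbedding, mem_rangeWithHole]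
  omega

lemma rangeWithHole_succ_right (a b : ℕ) :
    rangeWithHole a (b + 1) = insert (a + b + 1) (rangeWithHole a b) := by
  ext x
  simp only [mem_insert, mem_rangeWithHole]
  omega

section Products

variable {M : Type*} [CommMonoid M] (f : ℕ → M) (a b : ℕ)

lemma prod_range_eq_mul_prod_rangeWithHole :
    ∏ x ∈ range (a + b + 1), f x = f a * ∏ x ∈ rangeWithHole a b, f x := by
  rw [← insert_rangeWithHole, prod_insert fun h => (mem_rangeWithHole.1 h).2 rfl]

lemma prod_rangeWithHole_succ_left :
    ∏ x ∈ rangeWithHole (a + 1) b, f x = f 0 * ∏ x ∈ rangeWithHole a b, f (x + 1) := by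
  rw [rangeWithHole_succ_left, prod_insert (by simp), prod_map]
  rfl

lemma prod_rangeWithHole_succ_right :
    ∏ x ∈ rangeWithHole a (b + 1), f x = f (a + b + 1) * ∏ x ∈ rangeWithHole a b, f x := by
  rw [rangeWithHole_succ_right, prod_insert fun h => by simp [mem_rangeWithHole] at h]

end Products

lemma sineVandermonde_rangeWithHole_succ_left (θ : ℝ) (a b : ℕ) :
    sineVandermonde θ (rangeWithHole (a + 1) b) =
      sineVandermonde θ (rangeWithHole a b) *
        (sinProd θ 1 (a + 1) * sinProd θ (a + 2) (a + b + 2)) := by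
  rw [rangeWithHole_succ_left, sineVandermonde_insert_zero_map_add _ _ one_pos,
    prod_rangeWithHole, range_eq_Ico, prod_Ico_add' (fun d : ℕ => Real.sin ((d : ℝ) * θ)),
    prod_Ico_add' (fun d : ℕ => Real.sin ((d : ℝ) * θ))]
  rfl

lemma sineVandermonde_rangeWithHole_succ_right (θ : ℝ) (a b : ℕ) :
    sineVandermonde θ (rangeWithHole a (b + 1)) =
      sineVandermonde θ (rangeWithHole a b) *
        (sinProd θ (b + 2) (a + b + 2) * sinProd θ 1 (b + 1)) := by
  have hA : ∀ x ∈ rangeWithHole a b, x < a + b + 1 := fun x hx => (mem_rangeWithHole.1 hx).1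
  rw [rangeWithHole_succ_right, sineVandermonde_insert_of_forall_lt hA, prod_rangeWithHole,
    range_eq_Ico, prod_Ico_reflect (fun d : ℕ => Real.sin ((d : ℝ) * θ)) _ (by omega),
    prod_Ico_reflect (fun d : ℕ => Real.sin ((d : ℝ) * θ)) _ (by omega),
    show a + b + 1 + 1 - a = b + 2 by omega, show a + b + 1 + 1 - (a + b + 1) = 1 by omega,
    show a + b + 1 + 1 - (a + 1) = b + 1 by omega, Nat.sub_zero]
  rfl

lemma exists_sineVandermonde_common_factor (θ : ℝ) (a b : ℕ) : ∃ c : ℝ,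
    sineVandermonde θ (rangeWithHole (a + 1) (b + 1)) * sineVandermonde θ (range (a + b + 1))
        = c * Real.sin (((a + b + 2 : ℕ) : ℝ) * θ) ∧
      sineVandermonde θ (range (a + b + 2)) * sineVandermonde θ (rangeWithHole (a + 1) b)
        = c * Real.sin (((b + 1 : ℕ) : ℝ) * θ) ∧
      sineVandermonde θ (range (a + b + 2)) * sineVandermonde θ (rangeWithHole a (b + 1))
        = c * Real.sin (((a + 1 : ℕ) : ℝ) * θ) := by
  refine ⟨sineVandermonde θ (rangeWithHole a b) * sineVandermonde θ (range (a + b + 1)) *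
    sinProd θ 1 (a + 1) * sinProd θ 1 (b + 1) *
    sinProd θ (a + 2) (a + b + 2) * sinProd θ (b + 2) (a + b + 2), ?_, ?_, ?_⟩
  · rw [sineVandermonde_rangeWithHole_succ_right, sineVandermonde_rangeWithHole_succ_left,
      show a + 1 + b + 2 = a + b + 2 + 1 by omega,
      sinProd_succ θ (show b + 2 ≤ a + b + 2 by omega)]
    ring
  · rw [sineVandermonde_range_succ, sineVandermonde_rangeWithHole_succ_left,
      sinProd_eq_mul_mul θ (show 1 ≤ b + 1 by omega) (show b + 1 < a + b + 2 by omega)]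
    ring
  · rw [sineVandermonde_range_succ, sineVandermonde_rangeWithHole_succ_right,
      sinProd_eq_mul_mul θ (show 1 ≤ a + 1 by omega) (show a + 1 < a + b + 2 by omega)]
    ring

lemma gapSet_empty (k : ℕ) : gapSet k ∅ = range k := by
  simp [gapSet]

lemma gapSet_singleton (a b : ℕ) :
    gapSet (a + b + 2) {a + 1} = rangeWithHole (a + 1) (b + 1) := by
  ext x
  simp only [gapSet, card_singleton, mem_sdiff, mem_range, mem_singleton, mem_rangeWithHole]
  omega

lemma gapSet_Icc_one (n s : ℕ) :
    gapSet (n + 1) (Icc 1 s) = insert 0 ((range n).map (addRightEmbedding (s + 1))) := by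
  ext x
  simp only [gapSet, Nat.card_Icc, mem_sdiff, mem_range, mem_Icc, mem_insert,
    mem_map_addRightEmbedding]
  omega

lemma gapSet_insert_Icc_one_pred (a b : ℕ) {s : ℕ} (hs : 1 ≤ s) :
    gapSet (a + b + 2) (insert (a + 1 + s) (Icc 1 (s - 1))) =
      insert 0 ((rangeWithHole (a + 1) b).map (addRightEmbedding s)) := by
  have hcard : (insert (a + 1 + s) (Icc 1 (s - 1))).card = s := by
    rw [card_insert_of_notMem (by simp only [mem_Icc]; omega), Nat.card_Icc]
    omega
  ext x
  simp only [gapSet, hcard, mem_sdiff, mem_range, mem_Icc, mem_insert,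
    mem_map_addRightEmbedding, mem_rangeWithHole]
  omega

lemma gapSet_insert_Icc_one (a b s : ℕ) :
    gapSet (a + b + 2) (insert (a + 1 + s) (Icc 1 s)) =
      insert 0 ((rangeWithHole a (b + 1)).map (addRightEmbedding (s + 1))) := by
  have hcard : (insert (a + 1 + s) (Icc 1 s)).card = s + 1 := by
    rw [card_insert_of_notMem (by simp only [mem_Icc]; omega), Nat.card_Icc]
    omega
  ext x
  simp only [gapSet, hcard, mem_sdiff, mem_range, mem_Icc, mem_insert,
    mem_map_addRightEmbedding, mem_rangeWithHole]
  omega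

theorem sine_straightening_relation_general (k s j : ℕ) (hs : 1 ≤ s)
    (hj1 : 1 ≤ j) (hj2 : j ≤ k - 1) (θ : ℝ) :
    sineVandermonde θ (gapSet k {j}) * sineVandermonde θ (gapSet k (Finset.Icc 1 s))
      = sineVandermonde θ (gapSet k ∅)
          * sineVandermonde θ (gapSet k (insert (j + s) (Finset.Icc 1 (s - 1))))
        + sineVandermonde θ (gapSet k ∅)
          * sineVandermonde θ (gapSet k (insert (j + s) (Finset.Icc 1 s))) := by
  obtain ⟨a, rfl⟩ : ∃ a, j = a + 1 := ⟨j - 1, by omega⟩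
  obtain ⟨b, rfl⟩ : ∃ b, k = a + b + 2 := ⟨k - a - 2, by omega⟩
  obtain ⟨c, hc₁, hc₂, hc₃⟩ := exists_sineVandermonde_common_factor θ a b
  have hs₁ : 0 < s + 1 := s.succ_pos
  rw [gapSet_singleton, gapSet_Icc_one (a + b + 1), gapSet_empty,
    gapSet_insert_Icc_one_pred a b hs, gapSet_insert_Icc_one,
    sineVandermonde_insert_zero_map_add _ _ hs₁, sineVandermonde_insert_zero_map_add _ _ hs₁,
    sineVandermonde_insert_zero_map_add _ _ hs, prod_range_eq_mul_prod_rangeWithHole,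
    prod_rangeWithHole_succ_left, prod_rangeWithHole_succ_right]
  simp only [← mul_assoc, ← add_assoc, add_right_comm _ 1 s, zero_add]
  rw [hc₁, hc₂, hc₃]
  have ptolemy :=
    Real.sin_add_mul_sin_add (((b + 1 : ℕ) : ℝ) * θ) (((a + 1 : ℕ) : ℝ) * θ) ((s : ℝ) * θ)
  push_cast at ptolemy ⊢
  linear_combination (norm := ring_nf)
    c * (∏ x ∈ rangeWithHole a b, Real.sin ((x + s + 1) * θ)) * ptolemy

/-- The straightening identity `η_j · η_{[s]} = η_{[s−1]∪{j+s}} + η_{[s]∪{j+s}}` among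
sine-products, in division-free form: with `F₀ = F({0,…,k−1})`,
`F(A_{{j}})·F(A_{[s]}) = F₀·F(A_{[s−1]∪{j+s}}) + F₀·F(A_{[s]∪{j+s}})`. -/
theorem sine_straightening_relation (k s j : ℕ) (hk : 2 ≤ k) (hs : 1 ≤ s)
    (hj1 : 1 ≤ j) (hj2 : j ≤ k - 1) (θ : ℝ) :
    sineVandermonde θ (gapSet k {j}) * sineVandermonde θ (gapSet k (Finset.Icc 1 s))
      = sineVandermonde θ (gapSet k ∅)
          * sineVandermonde θ (gapSet k (insert (j + s) (Finset.Icc 1 (s - 1))))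
        + sineVandermonde θ (gapSet k ∅)
          * sineVandermonde θ (gapSet k (insert (j + s) (Finset.Icc 1 s))) :=
  sine_straightening_relation_general k s j hs hj1 hj2 θ
end

section
/- For all integers ℓ ≥ 1 and d ≥ 0: Σ_{a=0}^{min(ℓ−1, d)} C(ℓ−1, a) · C(ℓ−1+a, ℓ−1) · C(d+ℓ−1, d−a) = C(d+ℓ−1, ℓ−1)², where C(n, k) denotes the binomial coefficient. -/
/-!
With `n = ℓ - 1`, the identity `C(d+n, n+a) C(n+a, n) = C(d+n, n) C(d, a)` pulls the factor
`C(d+n, n)` out of every term, and what remains is the Vandermonde sum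
`Σ_a C(n, a) C(d, a) = C(n+d, d)`.
-/

open Finset

namespace Nat

theorem sum_range_choose_mul_choose (m n : ℕ) :
    ∑ a ∈ range (n + 1), m.choose a * n.choose a = (m + n).choose n := by
  rw [add_choose_eq, Finset.Nat.sum_antidiagonal_eq_sum_range_succ_mk]
  refine sum_congr rfl fun a ha => ?_
  rw [choose_symm (mem_range_succ_iff.mp ha)]

theorem sum_range_min_choose_mul_choose (m n : ℕ) :
    ∑ a ∈ range (min m n + 1), m.choose a * n.choose a = (m + n).choose n := by
  rw [← sum_range_choose_mul_choose]
  refine sum_subset (range_subset_range.2 (by omega)) fun a ha hna => ?_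
  simp only [mem_range] at ha hna
  rw [choose_eq_zero_of_lt (by omega : m < a), zero_mul]

theorem choose_add_mul_choose (m n a : ℕ) :
    (m + n).choose (n + a) * (n + a).choose n = (m + n).choose n * m.choose a := by
  rw [choose_mul (le_add_right n a), Nat.add_sub_cancel, Nat.add_sub_cancel_left]

theorem choose_mul_choose_add_mul_choose_sub {n a d : ℕ} (had : a ≤ d) :
    n.choose a * (n + a).choose n * (d + n).choose (d - a)
      = (d + n).choose n * (n.choose a * d.choose a) := by
  rw [choose_symm_of_eq_add (by omega : d + n = (d - a) + (n + a)), mul_assoc,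
    mul_comm ((n + a).choose n), choose_add_mul_choose]
  ring

end Nat

/-- Binomial identity counting degree-`d` cluster monomials in type `C_{ℓ−1}`:
`Σ_{a=0}^{min(ℓ−1,d)} C(ℓ−1,a)·C(ℓ−1+a,ℓ−1)·C(d+ℓ−1,d−a) = C(d+ℓ−1,ℓ−1)²`. -/
theorem cluster_monomial_count_identity (ℓ d : ℕ) (hℓ : 1 ≤ ℓ) :
    ∑ a ∈ Finset.range (min (ℓ - 1) d + 1),
        Nat.choose (ℓ - 1) a * Nat.choose (ℓ - 1 + a) (ℓ - 1)
          * Nat.choose (d + ℓ - 1) (d - a)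
      = (Nat.choose (d + ℓ - 1) (ℓ - 1)) ^ 2 := by
  obtain ⟨n, rfl⟩ : ∃ n, ℓ = n + 1 := ⟨ℓ - 1, by omega⟩
  rw [show d + (n + 1) - 1 = d + n by omega, Nat.add_sub_cancel]
  calc ∑ a ∈ range (min n d + 1), n.choose a * (n + a).choose n * (d + n).choose (d - a)
      = ∑ a ∈ range (min n d + 1), (d + n).choose n * (n.choose a * d.choose a) :=
        sum_congr rfl fun a ha =>
          Nat.choose_mul_choose_add_mul_choose_sub (by simp only [mem_range] at ha; omega)
    _ = (d + n).choose n * (n + d).choose d := by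
        rw [← mul_sum, Nat.sum_range_min_choose_mul_choose]
    _ = (d + n).choose n ^ 2 := by
        rw [add_comm n d, ← Nat.choose_symm_add, sq]
end
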